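/- Let G be a 2-edge-connected graph with \delta(G) > (\alpha(G) + 4)/2, let e be an edge of G and let G' = G - e. If X is a vertex subset of G' satisfying sun(G' - X) \geq 2|X| - \varepsilon(X) + 1, then |X| \geq 2. -/

import Mathlib

open SimpleGraph

section Defs

variable {V : Type*} {α β : Type*}

/-- A graph is *factor-critical* if deleting any vertex leaves a graph
with a perfect matching. -/
def FactorCritical (G : SimpleGraph V) : Prop :=
  ∀ v : V, ∃ M : (G.induce {u | u ≠ v}).Subgraph, M.IsPerfectMatching

/-- A *sun* is `K₁`, `K₂`, or a graph obtained from a factor-critical graph `R`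
with vertex set `Y = {y₁, …, yₙ}` by adding `n` new vertices `x₁, …, xₙ` and the
pendant edges `y₁x₁, …, yₙxₙ`. -/
def IsSun (G : SimpleGraph V) : Prop :=
  (Nat.card V = 1) ∨ (Nat.card V = 2 ∧ G.Connected) ∨
  (∃ Y : Set V, Y.Nonempty ∧ FactorCritical (G.induce Y) ∧
    ∃ f : (Yᶜ : Set V) ≃ Y, ∀ x : (Yᶜ : Set V), G.neighborSet ↑x = {(↑(f x) : V)})

/-- `sunCount G` is the number of connected components of `G` that are suns. -/
noncomputable def sunCount (G : SimpleGraph V) : ℕ :=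
  Nat.card {c : G.ConnectedComponent // IsSun (G.induce c.supp)}

/-- Number of isolated vertices of a graph. -/
noncomputable def isolatedCount (G : SimpleGraph V) : ℕ :=
  {v : V | ∀ w : V, ¬ G.Adj v w}.ncard

/-- A set of vertices is independent if no two of its vertices are adjacent. -/
def IndepSet (G : SimpleGraph V) (A : Set V) : Prop :=
  A.Pairwise fun u v => ¬ G.Adj u v

/-- The independence number of a graph: the maximum size of an independent set. -/
noncomputable def indepNum (G : SimpleGraph V) : ℕ :=
  sSup {n | ∃ A : Set V, IndepSet G A ∧ A.ncard = n}

/-- The neighborhood `N_G(A)` of a set `A` of vertices: the union of the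
neighborhoods of the vertices of `A`. -/
def neighborSetOf (G : SimpleGraph V) (A : Set V) : Set V :=
  {v | ∃ a ∈ A, G.Adj a v}

/-- `H` is a `P_{≥3}`-factor of `G`: a spanning subgraph of `G` each of whose
connected components is a path on at least `3` vertices. -/
def IsPathFactor (G H : SimpleGraph V) : Prop :=
  H ≤ G ∧ ∀ c : H.ConnectedComponent,
    ∃ n : ℕ, 3 ≤ n ∧ Nonempty ((H.induce c.supp) ≃g pathGraph n)

/-- A connected graph `G` is a `P_{≥3}`-factor covered graph if every edge of `G`
is contained in some `P_{≥3}`-factor of `G`. -/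
def PathFactorCovered (G : SimpleGraph V) : Prop :=
  G.Connected ∧ ∀ e ∈ G.edgeSet, ∃ H : SimpleGraph V, IsPathFactor G H ∧ e ∈ H.edgeSet

/-- A graph `G` is a `P_{≥3}`-factor uniform graph if `G - e` is a
`P_{≥3}`-factor covered graph for every edge `e` of `G`. -/
def PathFactorUniform (G : SimpleGraph V) : Prop :=
  ∀ e ∈ G.edgeSet, PathFactorCovered (G.deleteEdges {e})

/-- The parameter `ε(X)` from Zhou–Zhang's characterization of
`P_{≥3}`-factor covered graphs. -/
noncomputable def eps (G : SimpleGraph V) (X : Set V) : ℕ := by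
  classical
  exact if ¬ IndepSet G X then 2
    else if X.Nonempty ∧ ∃ c : (G.induce Xᶜ).ConnectedComponent,
        ¬ IsSun ((G.induce Xᶜ).induce c.supp) then 1
    else 0

/-- A graph is 2-edge-connected if it is connected and stays connected after
the deletion of any single edge. -/
def TwoEdgeConnected (G : SimpleGraph V) : Prop :=
  G.Connected ∧ ∀ e ∈ G.edgeSet, (G.deleteEdges {e}).Connected

/-- A graph is `k`-connected if it has more than `k` vertices and remains
connected after deleting any fewer than `k` vertices. -/
def KConnected [Fintype V] (k : ℕ) (G : SimpleGraph V) : Prop :=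
  k < Fintype.card V ∧ ∀ S : Set V, S.ncard < k → (G.induce Sᶜ).Connected

/-- The join `G₁ ∨ G₂` of two graphs: take disjoint copies of `G₁` and `G₂`
and add all edges between them. -/
def graphJoin (G : SimpleGraph α) (H : SimpleGraph β) : SimpleGraph (α ⊕ β) where
  Adj x y :=
    match x, y with
    | Sum.inl a, Sum.inl b => G.Adj a b
    | Sum.inr a, Sum.inr b => H.Adj a b
    | Sum.inl _, Sum.inr _ => True
    | Sum.inr _, Sum.inl _ => True
  symm := by
    refine ⟨?_⟩
    rintro (a | a) (b | b) h
    · exact G.symm.symm _ _ h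
    · trivial
    · trivial
    · exact H.symm.symm _ _ h
  loopless := by
    refine ⟨?_⟩
    rintro (a | a) h
    · exact G.loopless.irrefl a h
    · exact H.loopless.irrefl a h

/-- The disjoint union of two graphs. -/
def graphSum (G : SimpleGraph α) (H : SimpleGraph β) : SimpleGraph (α ⊕ β) where
  Adj x y :=
    match x, y with
    | Sum.inl a, Sum.inl b => G.Adj a b
    | Sum.inr a, Sum.inr b => H.Adj a b
    | _, _ => False
  symm := by
    refine ⟨?_⟩
    rintro (a | a) (b | b) h
    · exact G.symm.symm _ _ h
    · exact h.elim
    · exact h.elim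
    · exact H.symm.symm _ _ h
  loopless := by
    refine ⟨?_⟩
    rintro (a | a) h
    · exact G.loopless.irrefl a h
    · exact H.loopless.irrefl a h

/-- `mK2 m` is the disjoint union of `m` copies of `K₂`. -/
def mK2 (m : ℕ) : SimpleGraph (Fin m × Fin 2) where
  Adj p q := p.1 = q.1 ∧ p.2 ≠ q.2
  symm := by refine ⟨?_⟩; rintro p q ⟨h1, h2⟩; exact ⟨h1.symm, h2.symm⟩
  loopless := by refine ⟨?_⟩; rintro p ⟨h1, h2⟩; exact h2 rfl

end Defs

/-! Since `α(G) ≥ 0`, the degree condition gives `δ(G) ≥ 3`. A vertex of a component of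
`G' - X` has lost at most `|X| + 1` of its neighbours in `G`, and only the ends of `e` lose the
extra one. Every sun has an isolated vertex or two distinct vertices of degree at most `1`; so if
`|X| ≤ 1`, each sun component of `G' - X` forces `|X| = 1` and contains both ends of `e`. Hence
`sun(G' - X) ≤ |X|`, while `ε(X) ≤ |X|` because such an `X` is independent, contradicting
`sun(G' - X) ≥ 2|X| - ε(X) + 1`. -/

namespace SimpleGraph

variable {V : Type*}

lemma ncard_neighborSet_le_card_sub_one [Finite V] (H : SimpleGraph V) (v : V) :
    (H.neighborSet v).ncard ≤ Nat.card V - 1 := by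
  have hsub : H.neighborSet v ⊆ {v}ᶜ := fun u hu => (H.ne_of_adj hu).symm
  calc (H.neighborSet v).ncard ≤ ({v}ᶜ : Set V).ncard := Set.ncard_le_ncard hsub
    _ = Nat.card V - 1 := by rw [Set.ncard_compl, Set.ncard_singleton]

lemma neighborSet_deleteEdges_of_notMem (G : SimpleGraph V) {e : Sym2 V} {v : V} (hv : v ∉ e) :
    (G.deleteEdges {e}).neighborSet v = G.neighborSet v := by
  ext u
  simp only [mem_neighborSet, deleteEdges_adj, Set.mem_singleton_iff, and_iff_left_iff_imp]
  rintro - rfl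
  exact hv (Sym2.mem_mk_left v u)

lemma ncard_neighborSet_le_deleteEdges_add_one [Finite V] (G : SimpleGraph V) (e : Sym2 V)
    (v : V) : (G.neighborSet v).ncard ≤ ((G.deleteEdges {e}).neighborSet v).ncard + 1 := by
  by_cases hv : v ∈ e
  · have hsub :
        G.neighborSet v ⊆ insert (Sym2.Mem.other hv) ((G.deleteEdges {e}).neighborSet v) := by
      intro u hu
      by_cases hu' : u = Sym2.Mem.other hv
      · exact Or.inl hu'
      · refine Or.inr (deleteEdges_adj.mpr ⟨hu, fun he => hu' ?_⟩)
        rw [Set.mem_singleton_iff, ← Sym2.other_spec hv, Sym2.eq_iff] at he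
        rcases he with ⟨-, h⟩ | ⟨-, rfl⟩
        · exact h
        · exact absurd hu (G.loopless.irrefl _)
    exact (Set.ncard_le_ncard hsub).trans (Set.ncard_insert_le _ _)
  · rw [G.neighborSet_deleteEdges_of_notMem hv]
    omega

lemma ncard_neighborSet_le_induce_supp_add [Finite V] (H : SimpleGraph V) (X : Set V)
    (c : (H.induce Xᶜ).ConnectedComponent) (v : c.supp) :
    (H.neighborSet v).ncard ≤ (((H.induce Xᶜ).induce c.supp).neighborSet v).ncard + X.ncard := by
  set incl : c.supp → V := fun u => ((u : ↥Xᶜ) : V)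
  have hincl : Function.Injective incl := fun u₁ u₂ h => Subtype.ext (Subtype.ext h)
  have hsub : H.neighborSet v ⊆ incl '' ((H.induce Xᶜ).induce c.supp).neighborSet v ∪ X := by
    intro u hu
    by_cases huX : u ∈ X
    · exact Or.inr huX
    · have hadj : (H.induce Xᶜ).Adj v ⟨u, huX⟩ := hu
      have hmem : (⟨u, huX⟩ : ↥Xᶜ) ∈ c.supp :=
        (ConnectedComponent.sound hadj.symm.reachable).trans v.2
      exact Or.inl ⟨⟨⟨u, huX⟩, hmem⟩, hadj, rfl⟩
  calc (H.neighborSet v).ncard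
      ≤ (incl '' ((H.induce Xᶜ).induce c.supp).neighborSet v ∪ X).ncard :=
        Set.ncard_le_ncard hsub
    _ ≤ (incl '' ((H.induce Xᶜ).induce c.supp).neighborSet v).ncard + X.ncard :=
        Set.ncard_union_le _ _
    _ = _ := by rw [Set.ncard_image_of_injective _ hincl]

lemma ncard_neighborSet_eq_degree (G : SimpleGraph V) (v : V) [Fintype (G.neighborSet v)] :
    (G.neighborSet v).ncard = G.degree v := by
  rw [← card_neighborSet_eq_degree, ← Nat.card_eq_fintype_card, Nat.card_coe_set_eq]

end SimpleGraph

lemma IsSun.exists_isolated_or_two_leaves {W : Type*} [Finite W] {H : SimpleGraph W}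
    (hs : IsSun H) :
    (∃ v, (H.neighborSet v).ncard = 0) ∨
      ∃ v w, v ≠ w ∧ (H.neighborSet v).ncard ≤ 1 ∧ (H.neighborSet w).ncard ≤ 1 := by
  have small (hW : Nat.card W = 1 ∨ Nat.card W = 2) : (∃ v, (H.neighborSet v).ncard = 0) ∨
      ∃ v w, v ≠ w ∧ (H.neighborSet v).ncard ≤ 1 ∧ (H.neighborSet w).ncard ≤ 1 := by
    have hdeg := H.ncard_neighborSet_le_card_sub_one
    rcases hW with hW | hW
    · obtain ⟨v⟩ := (Nat.card_pos_iff.mp (by omega : 0 < Nat.card W)).1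
      exact Or.inl ⟨v, by have := hdeg v; omega⟩
    · have : Nontrivial W := Finite.one_lt_card_iff_nontrivial.mp (by omega)
      obtain ⟨v, w, hvw⟩ := exists_pair_ne W
      exact Or.inr ⟨v, w, hvw, by have := hdeg v; omega, by have := hdeg w; omega⟩
  rcases hs with hW | ⟨hW, -⟩ | ⟨Y, hY, -, f, hf⟩
  · exact small (Or.inl hW)
  · exact small (Or.inr hW)
  · by_cases hYc : Nontrivial ↥Yᶜ
    · obtain ⟨x₁, x₂, hx⟩ := exists_pair_ne ↥Yᶜ
      exact Or.inr ⟨x₁, x₂, Subtype.coe_ne_coe.mpr hx, by simp [hf], by simp [hf]⟩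
    · -- a sun on a single pendant edge is `K₂`
      have : Nonempty ↥Yᶜ := f.nonempty_congr.mpr hY.to_subtype
      have hYc1 : Nat.card ↥Yᶜ = 1 :=
        Nat.card_eq_one_iff_unique.mpr ⟨not_nontrivial_iff_subsingleton.mp hYc, this⟩
      have hY1 : Nat.card ↥Y = 1 := (Nat.card_congr f).symm.trans hYc1
      refine small (Or.inr ?_)
      rw [← Set.ncard_add_ncard_compl Y, ← Nat.card_coe_set_eq, ← Nat.card_coe_set_eq,
        hY1, hYc1]

lemma eps_le_ncard {V : Type*} [Finite V] {G : SimpleGraph V} {X : Set V} (hX : IndepSet G X) :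
    eps G X ≤ X.ncard := by
  unfold eps
  split_ifs with hne
  · exact (Set.ncard_pos).mpr hne.1
  · exact Nat.zero_le _

lemma indepSet_of_ncard_le_one {V : Type*} [Finite V] (G : SimpleGraph V) {X : Set V}
    (hX : X.ncard ≤ 1) : IndepSet G X :=
  (Set.ncard_le_one_iff_subsingleton.mp hX).pairwise _

section DeleteEdge

variable {V : Type*} [Finite V] {G : SimpleGraph V} {e : Sym2 V} {X : Set V}

lemma IsSun.ncard_eq_one_and_mem_supp (hδ : ∀ v, 3 ≤ (G.neighborSet v).ncard)
    (hX : X.ncard ≤ 1) {c : ((G.deleteEdges {e}).induce Xᶜ).ConnectedComponent}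
    (hc : IsSun (((G.deleteEdges {e}).induce Xᶜ).induce c.supp)) :
    X.ncard = 1 ∧ ∀ u ∈ e, ∃ hu : u ∉ X, (⟨u, hu⟩ : ↥Xᶜ) ∈ c.supp := by
  have hbound (v : c.supp) :
      (G.neighborSet v).ncard ≤
        ((((G.deleteEdges {e}).induce Xᶜ).induce c.supp).neighborSet v).ncard + X.ncard + 1 :=
    (G.ncard_neighborSet_le_deleteEdges_add_one e v).trans
      (by have := (G.deleteEdges {e}).ncard_neighborSet_le_induce_supp_add X c v; omega)
  have hleaf (v : c.supp)
      (hv : ((((G.deleteEdges {e}).induce Xᶜ).induce c.supp).neighborSet v).ncard ≤ 1) :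
      X.ncard = 1 ∧ ((v : ↥Xᶜ) : V) ∈ e := by
    have h₁ := hbound v
    have h₂ := (G.deleteEdges {e}).ncard_neighborSet_le_induce_supp_add X c v
    have h₃ := hδ v
    refine ⟨by omega, by_contra fun hve => ?_⟩
    rw [G.neighborSet_deleteEdges_of_notMem hve] at h₂
    omega
  rcases hc.exists_isolated_or_two_leaves with ⟨v, hv⟩ | ⟨v, w, hvw, hv, hw⟩
  · have := hbound v
    have := hδ v
    omega
  · obtain ⟨hX₁, hve⟩ := hleaf v hv
    obtain ⟨-, hwe⟩ := hleaf w hw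
    have hvw' : ((v : ↥Xᶜ) : V) ≠ w := fun h => hvw (Subtype.ext (Subtype.ext h))
    refine ⟨hX₁, fun u hu => ?_⟩
    rw [(Sym2.mem_and_mem_iff hvw').mp ⟨hve, hwe⟩, Sym2.mem_iff] at hu
    rcases hu with rfl | rfl
    · exact ⟨_, v.2⟩
    · exact ⟨_, w.2⟩

lemma sunCount_deleteEdges_le_ncard (hδ : ∀ v, 3 ≤ (G.neighborSet v).ncard)
    (hX : X.ncard ≤ 1) : sunCount ((G.deleteEdges {e}).induce Xᶜ) ≤ X.ncard := by
  rcases isEmpty_or_nonempty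
      {c : ((G.deleteEdges {e}).induce Xᶜ).ConnectedComponent //
        IsSun (((G.deleteEdges {e}).induce Xᶜ).induce c.supp)} with hempty | ⟨⟨c₀, hc₀⟩⟩
  · rw [sunCount, Nat.card_of_isEmpty]
    exact Nat.zero_le _
  · -- every sun component contains the same endpoint of `e`
    have hsub : Subsingleton {c : ((G.deleteEdges {e}).induce Xᶜ).ConnectedComponent //
        IsSun (((G.deleteEdges {e}).induce Xᶜ).induce c.supp)} := by
      refine ⟨fun ⟨c₁, hc₁⟩ ⟨c₂, hc₂⟩ => Subtype.ext ?_⟩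
      obtain ⟨_, h₁⟩ := (hc₁.ncard_eq_one_and_mem_supp hδ hX).2 _ (Sym2.out_fst_mem e)
      obtain ⟨_, h₂⟩ := (hc₂.ncard_eq_one_and_mem_supp hδ hX).2 _ (Sym2.out_fst_mem e)
      exact ((ConnectedComponent.mem_supp_iff _ _).mp h₁).symm.trans
        ((ConnectedComponent.mem_supp_iff _ _).mp h₂)
    rw [sunCount, (hc₀.ncard_eq_one_and_mem_supp hδ hX).1]
    exact Finite.card_le_one_iff_subsingleton.mpr hsub

end DeleteEdge

theorem stmt9_general {V : Type*} [Fintype V] (G : SimpleGraph V) [DecidableRel G.Adj]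
    (hdeg : (G.minDegree : ℝ) > ((_root_.indepNum G : ℝ) + 4) / 2)
    (e : Sym2 V) (X : Set V)
    (hX : (sunCount ((G.deleteEdges {e}).induce Xᶜ) : ℤ) ≥
      2 * X.ncard - eps (G.deleteEdges {e}) X + 1) :
    2 ≤ X.ncard := by
  by_contra! hX₂
  have hδ : ∀ v, 3 ≤ (G.neighborSet v).ncard := by
    have hα : (0 : ℝ) ≤ _root_.indepNum G := Nat.cast_nonneg _
    have : 2 < G.minDegree := by exact_mod_cast (by linarith : (2 : ℝ) < G.minDegree)
    intro v
    rw [ncard_neighborSet_eq_degree]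
    exact this.trans_le (G.minDegree_le_degree v)
  have hsun := sunCount_deleteEdges_le_ncard (e := e) hδ (by omega : X.ncard ≤ 1)
  have heps := eps_le_ncard (indepSet_of_ncard_le_one (G.deleteEdges {e}) (by omega : X.ncard ≤ 1))
  omega

/-- **Claim 2 in the proof of Theorem 1.3.** Let `G` be 2-edge-connected with
`δ(G) > (α(G)+4)/2`, let `e ∈ E(G)` and `G' = G - e`. If `X ⊆ V(G')` satisfies
`sun(G' - X) ≥ 2|X| - ε(X) + 1`, then `|X| ≥ 2`. -/
theorem stmt9 {V : Type*} [Fintype V] (G : SimpleGraph V) [DecidableRel G.Adj]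
    (h2ec : TwoEdgeConnected G)
    (hdeg : (G.minDegree : ℝ) > ((_root_.indepNum G : ℝ) + 4) / 2)
    (e : Sym2 V) (he : e ∈ G.edgeSet) (X : Set V)
    (hX : (sunCount ((G.deleteEdges {e}).induce Xᶜ) : ℤ) ≥
      2 * X.ncard - eps (G.deleteEdges {e}) X + 1) :
    2 ≤ X.ncard :=
  stmt9_general G hdeg e X hX
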